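/- For every directed social network G there exists an influence set A ⊆ V such that the Influence-and-Exploit strategy with pricing probability 2/3 satisfies R_IE(A, 2/3) ≥ 0.55289 · R_max(G). -/
import Mathlib


open Finset

/-- The revenue of a marketing strategy `(π, p)` on a directed social network. -/
noncomputable def drevenue {V : Type*} [Fintype V] [DecidableEq V]
    (w : V → V → ℝ) (π : V ≃ Fin (Fintype.card V)) (p : V → ℝ) : ℝ :=
  ∑ j, p j * (1 - p j) * ∑ i ∈ univ.filter (fun i => π i < π j), p i * w i j

/-- The maximum revenue of a directed social network. -/
noncomputable def dmaxRev {V : Type*} [Fintype V] [DecidableEq V]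
    (w : V → V → ℝ) : ℝ :=
  sSup {r | ∃ (π : V ≃ Fin (Fintype.card V)) (p : V → ℝ),
    (∀ i, 1/2 ≤ p i ∧ p i ≤ 1) ∧ r = drevenue w π p}

/-- The expected revenue of the Influence-and-Exploit strategy `IE(A, p)` on a
directed social network. -/
noncomputable def dieRev {V : Type*} [Fintype V] [DecidableEq V]
    (w : V → V → ℝ) (A : Finset V) (p : ℝ) : ℝ :=
  p * (1 - p) * ∑ j ∈ Aᶜ,
    (∑ i ∈ A, w i j + (p / 2) * ∑ i ∈ Aᶜ \ {j}, w i j)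

/-- Auxiliary multilinear extension used in the rounding argument. -/
noncomputable def Gfun {V : Type*} [Fintype V] [DecidableEq V]
    (w : V → V → ℝ) (q : V → ℝ) : ℝ :=
  ∑ j, (1 - q j) * ∑ i ∈ univ.erase j, w i j * ((1 + 2 * q i) / 3)

lemma Gfun_decomp {V : Type*} [Fintype V] [DecidableEq V]
    (w : V → V → ℝ) (q : V → ℝ) (a : V) :
    Gfun w q = (1 - q a) * (∑ i ∈ univ.erase a, w i a * ((1 + 2 * q i) / 3))
      + ((1 + 2 * q a) / 3) * (∑ j ∈ univ.erase a, (1 - q j) * w a j)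
      + ∑ j ∈ univ.erase a, (1 - q j) *
          ∑ i ∈ (univ.erase a).erase j, w i j * ((1 + 2 * q i) / 3) := by
  unfold Gfun
  rw [← Finset.add_sum_erase _
    (fun j => (1 - q j) * ∑ i ∈ univ.erase j, w i j * ((1 + 2 * q i) / 3)) (mem_univ a)]
  have h2 : ∀ j ∈ univ.erase a,
      (1 - q j) * ∑ i ∈ univ.erase j, w i j * ((1 + 2 * q i) / 3)
      = ((1 + 2 * q a) / 3) * ((1 - q j) * w a j)
        + (1 - q j) * ∑ i ∈ (univ.erase a).erase j, w i j * ((1 + 2 * q i) / 3) := by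
    intro j hj
    have hja : j ≠ a := Finset.ne_of_mem_erase hj
    have ha : a ∈ univ.erase j := Finset.mem_erase.mpr ⟨hja.symm, mem_univ a⟩
    rw [← Finset.add_sum_erase _ (fun i => w i j * ((1 + 2 * q i) / 3)) ha,
      Finset.erase_right_comm]
    ring
  rw [Finset.sum_congr rfl h2, Finset.sum_add_distrib, ← Finset.mul_sum]
  ring

lemma Gfun_comb {V : Type*} [Fintype V] [DecidableEq V]
    (w : V → V → ℝ) (q : V → ℝ) (a : V) :
    Gfun w q = (1 - q a) * Gfun w (Function.update q a 0)
      + q a * Gfun w (Function.update q a 1) := by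
  have key : ∀ t : ℝ, Gfun w (Function.update q a t)
      = (1 - t) * (∑ i ∈ univ.erase a, w i a * ((1 + 2 * q i) / 3))
        + ((1 + 2 * t) / 3) * (∑ j ∈ univ.erase a, (1 - q j) * w a j)
        + ∑ j ∈ univ.erase a, (1 - q j) *
            ∑ i ∈ (univ.erase a).erase j, w i j * ((1 + 2 * q i) / 3) := by
    intro t
    rw [Gfun_decomp w _ a]
    simp only [Function.update_self]
    congr 1
    · congr 1
      · congr 1
        refine Finset.sum_congr rfl fun i hi => ?_
        rw [Function.update_of_ne (Finset.ne_of_mem_erase hi)]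
      · congr 1
        refine Finset.sum_congr rfl fun j hj => ?_
        rw [Function.update_of_ne (Finset.ne_of_mem_erase hj)]
    · refine Finset.sum_congr rfl fun j hj => ?_
      rw [Function.update_of_ne (Finset.ne_of_mem_erase hj)]
      congr 1
      refine Finset.sum_congr rfl fun i hi => ?_
      rw [Function.update_of_ne (Finset.ne_of_mem_erase (Finset.mem_of_mem_erase hi))]
  rw [Gfun_decomp w q a, key 0, key 1]
  ring

lemma Gfun_round {V : Type*} [Fintype V] [DecidableEq V]
    (w : V → V → ℝ) :
    ∀ S : Finset V, ∀ q : V → ℝ, (∀ i, 0 ≤ q i ∧ q i ≤ 1) →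
      (∀ i ∉ S, q i = 0 ∨ q i = 1) →
      ∃ A : Finset V, Gfun w q ≤ Gfun w (fun i => if i ∈ A then 1 else 0) := by
  classical
  intro S
  induction S using Finset.induction_on with
  | empty =>
    intro q _ hq01
    refine ⟨univ.filter (fun i => q i = 1), le_of_eq ?_⟩
    have : (fun i => if i ∈ univ.filter (fun i => q i = 1) then (1:ℝ) else 0) = q := by
      funext i
      rcases hq01 i (Finset.notMem_empty i) with h | h <;> simp [h]
    rw [this]
  | @insert a S' ha IH =>
    intro q hq hq01
    have h0 : ∀ i, 0 ≤ Function.update q a 0 i ∧ Function.update q a 0 i ≤ 1 := by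
      intro i
      rcases eq_or_ne i a with rfl | h
      · simp
      · rw [Function.update_of_ne h]; exact hq i
    have h1 : ∀ i, 0 ≤ Function.update q a 1 i ∧ Function.update q a 1 i ≤ 1 := by
      intro i
      rcases eq_or_ne i a with rfl | h
      · simp
      · rw [Function.update_of_ne h]; exact hq i
    have h0' : ∀ i ∉ S', Function.update q a 0 i = 0 ∨ Function.update q a 0 i = 1 := by
      intro i hi
      rcases eq_or_ne i a with rfl | h
      · left; simp
      · rw [Function.update_of_ne h]
        exact hq01 i (by simp [Finset.mem_insert, h, hi])
    have h1' : ∀ i ∉ S', Function.update q a 1 i = 0 ∨ Function.update q a 1 i = 1 := by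
      intro i hi
      rcases eq_or_ne i a with rfl | h
      · right; simp
      · rw [Function.update_of_ne h]
        exact hq01 i (by simp [Finset.mem_insert, h, hi])
    have hcomb := Gfun_comb w q a
    rcases le_total (Gfun w (Function.update q a 0)) (Gfun w (Function.update q a 1)) with
      hle | hle
    · obtain ⟨A, hA⟩ := IH _ h1 h1'
      refine ⟨A, le_trans ?_ hA⟩
      have := (hq a).1
      have := (hq a).2
      nlinarith
    · obtain ⟨A, hA⟩ := IH _ h0 h0'
      refine ⟨A, le_trans ?_ hA⟩
      have := (hq a).1
      have := (hq a).2
      nlinarith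

lemma dieRev_eq_Gfun {V : Type*} [Fintype V] [DecidableEq V]
    (w : V → V → ℝ) (A : Finset V) :
    dieRev w A (2/3) = (2/9) * Gfun w (fun i => if i ∈ A then 1 else 0) := by
  classical
  unfold dieRev Gfun
  rw [show ((2:ℝ)/3 * (1 - 2/3)) = 2/9 by norm_num]
  congr 1
  rw [← Finset.sum_subset (Finset.subset_univ Aᶜ) (fun j _ hj => ?_)]
  · refine Finset.sum_congr rfl fun j hj => ?_
    have hjA : j ∉ A := Finset.mem_compl.mp hj
    simp only [if_neg hjA]
    have hsplit : ∑ i ∈ univ.erase j, w i j * ((1 + 2 * (if i ∈ A then (1:ℝ) else 0)) / 3)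
        = ∑ i ∈ univ.erase j, (if i ∈ A then w i j else w i j * (1/3)) := by
      refine Finset.sum_congr rfl fun i _ => ?_
      by_cases hi : i ∈ A <;> simp [hi] <;> ring
    rw [hsplit, Finset.sum_ite]
    have e1 : (univ.erase j).filter (fun i => i ∈ A) = A := by
      ext i
      simp only [Finset.mem_filter, Finset.mem_erase, Finset.mem_univ, true_and, and_true]
      constructor
      · exact fun h => h.2
      · intro h; exact ⟨fun he => hjA (he ▸ h), h⟩
    have e2 : (univ.erase j).filter (fun i => i ∉ A) = Aᶜ \ {j} := by
      ext i
      simp only [Finset.mem_filter, Finset.mem_erase, Finset.mem_univ, true_and,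
        Finset.mem_sdiff, Finset.mem_compl, Finset.mem_singleton]
      tauto
    rw [e1, e2, ← Finset.sum_mul]
    ring
  · have hjA : j ∈ A := by simpa using hj
    simp [hjA]

lemma drevenue_le_Gfun {V : Type*} [Fintype V] [DecidableEq V]
    (w : V → V → ℝ) (hnonneg : ∀ i j, 0 ≤ w i j)
    (π : V ≃ Fin (Fintype.card V)) (p : V → ℝ)
    (hp : ∀ i, 1/2 ≤ p i ∧ p i ≤ 1) :
    (9/16) * drevenue w π p ≤ (2/9) * Gfun w (fun i => (9 * p i - 4) / 8) := by
  classical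
  unfold drevenue Gfun
  rw [Finset.mul_sum, Finset.mul_sum]
  refine Finset.sum_le_sum fun j _ => ?_
  have calc1 : (9:ℝ)/16 * (p j * (1 - p j) * ∑ i ∈ univ.filter (fun i => π i < π j), p i * w i j)
      = ∑ i ∈ univ.filter (fun i => π i < π j), (9/16) * (p j * (1 - p j)) * (p i * w i j) := by
    simp only [Finset.mul_sum]
    exact Finset.sum_congr rfl fun i _ => by ring
  have calc2 : (2:ℝ)/9 * ((1 - (9 * p j - 4) / 8) *
        ∑ i ∈ univ.erase j, w i j * ((1 + 2 * ((9 * p i - 4) / 8)) / 3))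
      = ∑ i ∈ univ.erase j, (1/16) * (4 - 3 * p j) * (p i * w i j) := by
    rw [Finset.mul_sum, Finset.mul_sum]
    refine Finset.sum_congr rfl fun i _ => ?_
    ring
  rw [calc1, calc2]
  have hsub : univ.filter (fun i => π i < π j) ⊆ univ.erase j := by
    intro i hi
    have hlt : π i < π j := (Finset.mem_filter.mp hi).2
    exact Finset.mem_erase.mpr ⟨fun he => absurd hlt (by simp [he]), mem_univ i⟩
  calc ∑ i ∈ univ.filter (fun i => π i < π j), (9/16) * (p j * (1 - p j)) * (p i * w i j)
      ≤ ∑ i ∈ univ.filter (fun i => π i < π j), (1/16) * (4 - 3 * p j) * (p i * w i j) := by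
        refine Finset.sum_le_sum fun i _ => ?_
        have hpi := hp i
        have hpj := hp j
        have hw := hnonneg i j
        have hpw : 0 ≤ p i * w i j := mul_nonneg (by linarith [hpi.1]) hw
        have hc : (9:ℝ)/16 * (p j * (1 - p j)) ≤ (1/16) * (4 - 3 * p j) := by
          nlinarith [sq_nonneg (3 * p j - 2)]
        exact mul_le_mul_of_nonneg_right hc hpw
    _ ≤ ∑ i ∈ univ.erase j, (1/16) * (4 - 3 * p j) * (p i * w i j) := by
        refine Finset.sum_le_sum_of_subset_of_nonneg hsub fun i _ _ => ?_
        have hpi := hp i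
        have hpj := hp j
        have hw := hnonneg i j
        have hpw : 0 ≤ p i * w i j := mul_nonneg (by linarith [hpi.1]) hw
        have : (0:ℝ) ≤ (1/16) * (4 - 3 * p j) := by nlinarith [hpj.2]
        exact mul_nonneg this hpw

/-- For every directed social network there is an IE strategy with pricing
probability `2/3` whose expected revenue is at least `0.55289` times the maximum
revenue. -/
theorem bestIE_directed
    {V : Type*} [Fintype V] [DecidableEq V] (w : V → V → ℝ)
    (hnonneg : ∀ i j, 0 ≤ w i j) (hself : ∀ i, w i i = 0) :
    ∃ A : Finset V, dieRev w A (2/3) ≥ 0.55289 * dmaxRev w := by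
  classical
  obtain ⟨A₀, -, hA₀⟩ := Finset.exists_max_image (univ : Finset (Finset V))
    (fun A => dieRev w A (2/3)) ⟨∅, mem_univ ∅⟩
  refine ⟨A₀, ?_⟩
  set M := dieRev w A₀ (2/3) with hM
  -- every achievable revenue r satisfies (9/16) r ≤ M
  have hub : ∀ r ∈ {r | ∃ (π : V ≃ Fin (Fintype.card V)) (p : V → ℝ),
      (∀ i, 1/2 ≤ p i ∧ p i ≤ 1) ∧ r = drevenue w π p}, r ≤ (16/9) * M := by
    rintro r ⟨π, p, hp, rfl⟩
    set q : V → ℝ := fun i => (9 * p i - 4) / 8 with hq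
    have hq01 : ∀ i, 0 ≤ q i ∧ q i ≤ 1 := by
      intro i
      have := hp i
      constructor <;> simp only [hq] <;> [linarith [this.1]; linarith [this.2]]
    obtain ⟨A, hA⟩ := Gfun_round w univ q hq01 (fun i hi => absurd (mem_univ i) hi)
    have h1 := drevenue_le_Gfun w hnonneg π p hp
    have h2 : (2/9) * Gfun w q ≤ (2/9) * Gfun w (fun i => if i ∈ A then 1 else 0) := by
      linarith
    have h3 : (2/9 : ℝ) * Gfun w (fun i => if i ∈ A then 1 else 0) = dieRev w A (2/3) :=
      (dieRev_eq_Gfun w A).symm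
    have h4 : dieRev w A (2/3) ≤ M := hA₀ A (mem_univ A)
    linarith
  have hne : {r | ∃ (π : V ≃ Fin (Fintype.card V)) (p : V → ℝ),
      (∀ i, 1/2 ≤ p i ∧ p i ≤ 1) ∧ r = drevenue w π p}.Nonempty := by
    refine ⟨drevenue w (Fintype.equivFin V) (fun _ => 1),
      Fintype.equivFin V, fun _ => 1, fun i => by norm_num, rfl⟩
  have hbdd : BddAbove {r | ∃ (π : V ≃ Fin (Fintype.card V)) (p : V → ℝ),
      (∀ i, 1/2 ≤ p i ∧ p i ≤ 1) ∧ r = drevenue w π p} := ⟨(16/9) * M, hub⟩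
  have hsup_le : dmaxRev w ≤ (16/9) * M := csSup_le hne hub
  have hzero : (0:ℝ) ∈ {r | ∃ (π : V ≃ Fin (Fintype.card V)) (p : V → ℝ),
      (∀ i, 1/2 ≤ p i ∧ p i ≤ 1) ∧ r = drevenue w π p} := by
    refine ⟨Fintype.equivFin V, fun _ => 1, fun i => by norm_num, ?_⟩
    unfold drevenue
    simp
  have hsup_nonneg : 0 ≤ dmaxRev w := le_csSup hbdd hzero
  have : (0.55289 : ℝ) * dmaxRev w ≤ (9/16) * dmaxRev w := by
    apply mul_le_mul_of_nonneg_right _ hsup_nonneg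
    norm_num
  have : (9/16 : ℝ) * dmaxRev w ≤ M := by linarith
  linarith
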